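/- The c-Schur property (c ≥ 1) is preserved by arbitrary ℓ₁-sums: if (X_i)_{i∈I} is a family of Banach spaces each with the c-Schur property, then the ℓ₁-sum (⊕_{i∈I} X_i)_{ℓ₁} has the c-Schur property. -/

import Mathlib

open Filter Metric

/-- The oscillation `ca(x_n) = inf_n diam {x_k : k ≥ n}` of a sequence. -/
noncomputable def ca {X : Type*} [PseudoMetricSpace X] (x : ℕ → X) : ℝ :=
  ⨅ n : ℕ, Metric.diam (x '' Set.Ici n)

/-- `δ(x_n) = sup {ca(⟨x*, x_n⟩) : x* ∈ B_{X*}}`, the measure of weak non-Cauchyness. -/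
noncomputable def delta {X : Type*} [NormedAddCommGroup X] [NormedSpace ℝ X] (x : ℕ → X) : ℝ :=
  sSup {r : ℝ | ∃ f : X →L[ℝ] ℝ, ‖f‖ ≤ 1 ∧ r = ca fun n => f (x n)}

section CA

variable {X : Type*} [PseudoMetricSpace X] (x : ℕ → X)

lemma ca_bddBelow : BddBelow (Set.range fun n => Metric.diam (x '' Set.Ici n)) :=
  ⟨0, by rintro r ⟨n, rfl⟩; exact Metric.diam_nonneg⟩

lemma ca_le (n : ℕ) : ca x ≤ Metric.diam (x '' Set.Ici n) :=
  ciInf_le (ca_bddBelow x) n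

lemma le_ca {a : ℝ} (h : ∀ n, a ≤ Metric.diam (x '' Set.Ici n)) : a ≤ ca x :=
  le_ciInf h

lemma ca_nonneg : 0 ≤ ca x := le_ca x fun _ => Metric.diam_nonneg

end CA

section Delta

variable {X : Type*} [NormedAddCommGroup X] [NormedSpace ℝ X] (x : ℕ → X)

lemma ca_comp_le_two_mul {f : X →L[ℝ] ℝ} (hf : ‖f‖ ≤ 1) {M : ℝ} (hM : ∀ n, ‖x n‖ ≤ M) :
    ca (fun n => f (x n)) ≤ 2 * M := by
  refine le_trans (ca_le _ 0) (Metric.diam_le_of_forall_dist_le ?_ ?_)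
  · have := (norm_nonneg (x 0)).trans (hM 0); linarith
  · rintro a ⟨k, -, rfl⟩ b ⟨l, -, rfl⟩
    have h1 : ∀ m : ℕ, |f (x m)| ≤ M := by
      intro m
      calc |f (x m)| = ‖f (x m)‖ := rfl
        _ ≤ ‖f‖ * ‖x m‖ := f.le_opNorm _
        _ ≤ 1 * M := by
            have := norm_nonneg (x m)
            exact mul_le_mul hf (hM m) (norm_nonneg _) zero_le_one
        _ = M := one_mul M
    have := h1 k; have := h1 l
    rw [Real.dist_eq]
    have := abs_sub_abs_le_abs_sub (f (x k)) (f (x l))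
    have := abs_sub (f (x k)) (f (x l))
    calc |f (x k) - f (x l)| ≤ |f (x k)| + |f (x l)| := abs_sub _ _
      _ ≤ 2 * M := by linarith

lemma zero_mem_delta_set : (0 : ℝ) ∈ {r : ℝ | ∃ f : X →L[ℝ] ℝ, ‖f‖ ≤ 1 ∧ r = ca fun n => f (x n)} := by
  refine ⟨0, by simp, ?_⟩
  unfold ca
  have h : (fun n : ℕ => Metric.diam ((fun m => (0 : X →L[ℝ] ℝ) (x m)) '' Set.Ici n)) = fun _ => 0 := by
    funext n
    have : (fun m => (0 : X →L[ℝ] ℝ) (x m)) '' Set.Ici n = {(0:ℝ)} := by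
      apply Set.eq_singleton_iff_nonempty_unique_mem.2
      constructor
      · exact ⟨0, ⟨n, Set.self_mem_Ici, rfl⟩⟩
      · rintro y ⟨m, -, rfl⟩; simp
    rw [this, Metric.diam_singleton]
  rw [show (⨅ n : ℕ, Metric.diam ((fun m => (0 : X →L[ℝ] ℝ) (x m)) '' Set.Ici n)) = ⨅ n : ℕ, (0:ℝ) from by rw [h]]
  simp

lemma delta_bddAbove {M : ℝ} (hM : ∀ n, ‖x n‖ ≤ M) :
    BddAbove {r : ℝ | ∃ f : X →L[ℝ] ℝ, ‖f‖ ≤ 1 ∧ r = ca fun n => f (x n)} := by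
  refine ⟨2 * M, ?_⟩
  rintro r ⟨f, hf, rfl⟩
  exact ca_comp_le_two_mul x hf hM

lemma ca_comp_le_delta {M : ℝ} (hM : ∀ n, ‖x n‖ ≤ M) {f : X →L[ℝ] ℝ} (hf : ‖f‖ ≤ 1) :
    ca (fun n => f (x n)) ≤ delta x :=
  le_csSup (delta_bddAbove x hM) ⟨f, hf, rfl⟩

lemma delta_nonneg {M : ℝ} (hM : ∀ n, ‖x n‖ ≤ M) : 0 ≤ delta x :=
  le_csSup (delta_bddAbove x hM) (zero_mem_delta_set x)

end Delta

section L1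

variable {E : Type*} [NormedAddCommGroup E] [NormedSpace ℝ E]

lemma L1 {c : ℝ} (hc : 1 ≤ c)
    (hE : ∀ x : ℕ → E, (∃ M : ℝ, ∀ n, ‖x n‖ ≤ M) → ca x ≤ c * delta x)
    (v : ℕ → E) (hv : ∃ M : ℝ, ∀ n, ‖v n‖ ≤ M) (s ε : ℝ) (hε : 0 < ε)
    (hlow : ∀ j, c * s + ε ≤ ‖v j‖) :
    ∃ f : E →L[ℝ] ℝ, ‖f‖ ≤ 1 ∧ ∃ᶠ j in atTop, s < |f (v j)| := by
  have hc0 : (0:ℝ) < c := lt_of_lt_of_le one_pos hc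
  rcases lt_or_ge s 0 with hs | hs
  · exact ⟨0, by simp, Frequently.of_forall fun j => by simpa using hs⟩
  obtain ⟨M, hM⟩ := hv
  set u : ℕ → E := fun j => if Even j then v (j / 2) else -(v (j / 2)) with hu
  have huM : ∀ j, ‖u j‖ ≤ M := by
    intro j
    by_cases h : Even j <;> simp [hu, h, hM]
  have habs : ∀ j, ‖u j‖ = ‖v (j / 2)‖ := by
    intro j; by_cases h : Even j <;> simp [hu, h]
  have hfu : ∀ (f : E →L[ℝ] ℝ) (j : ℕ), |f (u j)| = |f (v (j / 2))| := by
    intro f j; by_cases h : Even j <;> simp [hu, h, abs_neg]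
  -- lower bound on ca u
  have hcau : 2 * (c * s + ε) ≤ ca u := by
    apply le_ca
    intro n
    have hbd : Bornology.IsBounded (u '' Set.Ici n) := by
      apply (Metric.isBounded_closedBall (x := (0:E)) (r := M)).subset
      rintro a ⟨m, -, rfl⟩
      exact mem_closedBall_zero_iff.2 (huM m)
    have h1 : u (2 * n) ∈ u '' Set.Ici n := ⟨2 * n, Set.mem_Ici.2 (by omega), rfl⟩
    have h2 : u (2 * n + 1) ∈ u '' Set.Ici n := ⟨2 * n + 1, Set.mem_Ici.2 (by omega), rfl⟩
    have e1 : u (2 * n) = v n := by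
      have : Even (2 * n) := even_two_mul n
      simp [hu, this, Nat.mul_div_cancel_left n two_pos]
    have e2 : u (2 * n + 1) = -(v n) := by
      have h' : ¬ Even (2 * n + 1) := by simp [Nat.even_add_one, even_two_mul n]
      have h'' : (2 * n + 1) / 2 = n := by omega
      simp [hu, h', h'']
    have hdist : dist (u (2 * n)) (u (2 * n + 1)) = 2 * ‖v n‖ := by
      rw [e1, e2, dist_eq_norm, sub_neg_eq_add, ← two_smul ℝ (v n), norm_smul]
      simp
    calc 2 * (c * s + ε) ≤ 2 * ‖v n‖ := by
          have := hlow n; linarith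
      _ = dist (u (2 * n)) (u (2 * n + 1)) := hdist.symm
      _ ≤ Metric.diam (u '' Set.Ici n) := Metric.dist_le_diam_of_mem hbd h1 h2
  have hdel : 2 * s + ε / c < delta u := by
    have h1 : ca u ≤ c * delta u := hE u ⟨M, huM⟩
    rw [← mul_lt_mul_iff_right₀ hc0]
    have : c * (2 * s + ε / c) = 2 * (c * s) + ε := by
      field_simp
    rw [this]
    nlinarith [hcau]
  obtain ⟨r, hrmem, hr⟩ := exists_lt_of_lt_csSup ⟨0, zero_mem_delta_set u⟩ hdel
  obtain ⟨f, hf1, rfl⟩ := hrmem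
  refine ⟨f, hf1, ?_⟩
  by_contra hcon
  rw [Filter.not_frequently] at hcon
  obtain ⟨N, hN⟩ := Filter.eventually_atTop.1 hcon
  have hfin : ca (fun n => f (u n)) ≤ 2 * s := by
    refine le_trans (ca_le _ (2 * N)) (Metric.diam_le_of_forall_dist_le (by linarith) ?_)
    rintro a ⟨k, hk, rfl⟩ b ⟨l, hl, rfl⟩
    have key : ∀ m : ℕ, 2 * N ≤ m → |f (u m)| ≤ s := by
      intro m hm
      rw [hfu]
      have : N ≤ m / 2 := by omega
      have := hN (m / 2) this
      simpa using this
    have h1 := key k hk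
    have h2 := key l hl
    rw [Real.dist_eq]
    calc |f (u k) - f (u l)| ≤ |f (u k)| + |f (u l)| := abs_sub _ _
      _ ≤ 2 * s := by linarith
  have hpos : 0 < ε / c := div_pos hε hc0
  linarith

end L1

section Lp

variable {ι : Type*} {X : ι → Type*} [∀ i, NormedAddCommGroup (X i)] [∀ i, NormedSpace ℝ (X i)]

lemma lp1_hasSum (z : lp X 1) : HasSum (fun i => ‖z i‖) ‖z‖ := by
  have h := lp.hasSum_norm (p := 1) (by norm_num) z
  simpa using h

lemma lp1_summable (z : lp X 1) : Summable (fun i => ‖z i‖) := (lp1_hasSum z).summable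

lemma lp1_sum_le (z : lp X 1) (S : Finset ι) : ∑ i ∈ S, ‖z i‖ ≤ ‖z‖ :=
  sum_le_hasSum S (fun i _ => norm_nonneg _) (lp1_hasSum z)

lemma lp1_coord_le (z : lp X 1) (i : ι) : ‖z i‖ ≤ ‖z‖ :=
  le_hasSum (lp1_hasSum z) i (fun j _ => norm_nonneg _)

lemma lp1_tail (z : lp X 1) {ε : ℝ} (hε : 0 < ε) :
    ∃ S : Finset ι, ‖z‖ - ε < ∑ i ∈ S, ‖z i‖ := by
  have h : Filter.Tendsto (fun S : Finset ι => ∑ i ∈ S, ‖z i‖) Filter.atTop (nhds ‖z‖) :=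
    lp1_hasSum z
  have h2 := h.eventually (eventually_gt_nhds (show ‖z‖ - ε < ‖z‖ by linarith))
  exact h2.exists

lemma lp1_compl_sum (z : lp X 1) (S : Finset ι) :
    ∑' i : ↑((↑S : Set ι)ᶜ), ‖z ↑i‖ = ‖z‖ - ∑ i ∈ S, ‖z i‖ := by
  have h := Summable.sum_add_tsum_compl (s := S) (lp1_summable z)
  have h2 := (lp1_hasSum z).tsum_eq
  rw [h2] at h
  linarith

lemma sumF_norm_le (u : ∀ i, X i →L[ℝ] ℝ) (hu : ∀ i, ‖u i‖ ≤ 1) (z : lp X 1) (i : ι) :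
    ‖u i (z i)‖ ≤ ‖z i‖ := by
  calc ‖u i (z i)‖ ≤ ‖u i‖ * ‖z i‖ := (u i).le_opNorm _
    _ ≤ 1 * ‖z i‖ := mul_le_mul_of_nonneg_right (hu i) (norm_nonneg _)
    _ = ‖z i‖ := one_mul _

lemma sumF_summable (u : ∀ i, X i →L[ℝ] ℝ) (hu : ∀ i, ‖u i‖ ≤ 1) (z : lp X 1) :
    Summable (fun i => u i (z i)) :=
  Summable.of_norm_bounded (lp1_summable z) (sumF_norm_le u hu z)

lemma sumF_norm_summable (u : ∀ i, X i →L[ℝ] ℝ) (hu : ∀ i, ‖u i‖ ≤ 1) (z : lp X 1) :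
    Summable (fun i => ‖u i (z i)‖) :=
  Summable.of_nonneg_of_le (fun _ => norm_nonneg _) (sumF_norm_le u hu z) (lp1_summable z)

lemma sumF_bound (u : ∀ i, X i →L[ℝ] ℝ) (hu : ∀ i, ‖u i‖ ≤ 1) (z : lp X 1) :
    ‖∑' i, u i (z i)‖ ≤ ‖z‖ := by
  calc ‖∑' i, u i (z i)‖ ≤ ∑' i, ‖u i (z i)‖ :=
        norm_tsum_le_tsum_norm (sumF_norm_summable u hu z)
    _ ≤ ∑' i, ‖z i‖ := Summable.tsum_le_tsum (sumF_norm_le u hu z)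
        (sumF_norm_summable u hu z) (lp1_summable z)
    _ = ‖z‖ := (lp1_hasSum z).tsum_eq

noncomputable def combF (u : ∀ i, X i →L[ℝ] ℝ) (hu : ∀ i, ‖u i‖ ≤ 1) : lp X 1 →L[ℝ] ℝ :=
  LinearMap.mkContinuous
    { toFun := fun z => ∑' i, u i (z i)
      map_add' := by
        intro z w
        rw [← Summable.tsum_add (sumF_summable u hu z) (sumF_summable u hu w)]
        apply tsum_congr
        intro i
        have h : (z + w) i = z i + w i := congrFun (lp.coeFn_add z w) i
        rw [h, map_add]
      map_smul' := by
        intro m z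
        simp only [RingHom.id_apply]
        rw [← tsum_const_smul'' m]
        apply tsum_congr
        intro i
        have h : (m • z) i = m • (z i) := congrFun (lp.coeFn_smul m z) i
        rw [h, map_smul] }
    1 (fun z => by simpa using sumF_bound u hu z)

lemma combF_apply (u : ∀ i, X i →L[ℝ] ℝ) (hu : ∀ i, ‖u i‖ ≤ 1) (z : lp X 1) :
    combF u hu z = ∑' i, u i (z i) := rfl

lemma combF_norm_le (u : ∀ i, X i →L[ℝ] ℝ) (hu : ∀ i, ‖u i‖ ≤ 1) :
    ‖combF u hu‖ ≤ 1 :=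
  LinearMap.mkContinuous_norm_le _ zero_le_one _

lemma combF_split (u : ∀ i, X i →L[ℝ] ℝ) (hu : ∀ i, ‖u i‖ ≤ 1) (z : lp X 1) (T : Finset ι) :
    combF u hu z = ∑ i ∈ T, u i (z i) + ∑' i : ↑((↑T : Set ι)ᶜ), u ↑i (z ↑i) := by
  rw [combF_apply]
  exact (Summable.sum_add_tsum_compl (s := T) (sumF_summable u hu z)).symm

lemma combF_compl_bound (u : ∀ i, X i →L[ℝ] ℝ) (hu : ∀ i, ‖u i‖ ≤ 1) (z : lp X 1) (T : Finset ι) :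
    |∑' i : ↑((↑T : Set ι)ᶜ), u ↑i (z ↑i)| ≤ ‖z‖ - ∑ i ∈ T, ‖z i‖ := by
  have h1 : Summable (fun i : ↑((↑T : Set ι)ᶜ) => ‖u ↑i (z ↑i)‖) :=
    (sumF_norm_summable u hu z).subtype _
  calc |∑' i : ↑((↑T : Set ι)ᶜ), u ↑i (z ↑i)| ≤ ∑' i : ↑((↑T : Set ι)ᶜ), ‖u ↑i (z ↑i)‖ :=
        norm_tsum_le_tsum_norm h1
    _ ≤ ∑' i : ↑((↑T : Set ι)ᶜ), ‖z ↑i‖ :=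
        Summable.tsum_le_tsum (fun i => sumF_norm_le u hu z i) h1 ((lp1_summable z).subtype _)
    _ = ‖z‖ - ∑ i ∈ T, ‖z i‖ := lp1_compl_sum z T

end Lp

section LS

lemma LS {ι : Type*} {X : ι → Type*} [∀ i, NormedAddCommGroup (X i)] [∀ i, NormedSpace ℝ (X i)]
    {c : ℝ} (hc : 1 ≤ c)
    (hX : ∀ i, ∀ x : ℕ → X i, (∃ M : ℝ, ∀ n, ‖x n‖ ≤ M) → ca x ≤ c * delta x)
    (S : Finset ι) :
    ∀ (y : ℕ → lp X 1) (C : ℝ), (∀ j, ‖y j‖ ≤ C) → ∀ (s ε : ℝ), 0 < ε →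
      (∀ j, c * s + ε ≤ ∑ i ∈ S, ‖y j i‖) →
      ∃ u : ∀ i, X i →L[ℝ] ℝ, (∀ i, ‖u i‖ ≤ 1) ∧
        ∃ φ : ℕ → ℕ, StrictMono φ ∧ ∀ j, s < ∑ i ∈ S, u i (y (φ j) i) := by
  classical
  have hc0 : (0:ℝ) < c := lt_of_lt_of_le one_pos hc
  induction S using Finset.induction_on with
  | empty =>
    intro y C hC s ε hε hy
    refine ⟨fun _ => 0, fun _ => by simp, id, strictMono_id, fun j => ?_⟩
    have h := hy j
    simp only [Finset.sum_empty] at h ⊢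
    nlinarith
  | @insert a S' ha IH =>
    intro y C hC s ε hε hy
    set v : ℕ → X a := fun j => y j a with hv
    have hvC : ∀ j, ‖v j‖ ≤ C := fun j => (lp1_coord_le (y j) a).trans (hC j)
    obtain ⟨α, hαmem, φ₀, hφ₀, hconv⟩ :=
      tendsto_subseq_of_bounded (Metric.isBounded_Icc (0:ℝ) C)
        (x := fun j => ‖v j‖) (fun j => ⟨norm_nonneg _, hvC j⟩)
    obtain ⟨N, hN⟩ := (Metric.tendsto_atTop.1 hconv) (ε/8) (by positivity)
    set φ₁ : ℕ → ℕ := fun j => φ₀ (j + N) with hφ₁def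
    have hmono : StrictMono (fun j : ℕ => j + N) := fun x y h => by simpa using h
    have hφ₁ : StrictMono φ₁ := hφ₀.comp hmono
    have hα1 : ∀ j, |‖y (φ₁ j) a‖ - α| < ε/8 := by
      intro j
      have := hN (j + N) (by omega)
      simpa [Real.dist_eq, Function.comp] using this
    set sa : ℝ := (α - ε/4)/c with hsa
    have hcsa : c * sa = α - ε/4 := by
      rw [hsa, mul_div_cancel₀ _ (ne_of_gt hc0)]
    have hlow1 : ∀ j, c * sa + ε/8 ≤ ‖(fun j => y (φ₁ j) a) j‖ := by
      intro j
      have h := hα1 j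
      rw [abs_lt] at h
      simp only []
      linarith [hcsa, h.1]
    obtain ⟨f, hf1, hffreq⟩ := L1 hc (hX a) (fun j => y (φ₁ j) a)
      ⟨C, fun j => hvC (φ₁ j)⟩ sa (ε/8) (by positivity) hlow1
    have hsign : ∃ g : X a →L[ℝ] ℝ, ‖g‖ ≤ 1 ∧ ∃ᶠ j in Filter.atTop, sa < g (y (φ₁ j) a) := by
      have h2 : ∃ᶠ j in Filter.atTop,
          (sa < f (y (φ₁ j) a) ∨ sa < -f (y (φ₁ j) a)) :=
        hffreq.mono (fun j hj => lt_abs.1 hj)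
      rcases Filter.frequently_or_distrib.1 h2 with h | h
      · exact ⟨f, hf1, h⟩
      · refine ⟨-f, by simpa using hf1, ?_⟩
        simpa using h
    obtain ⟨g, hg1, hgfreq⟩ := hsign
    obtain ⟨φ₂, hφ₂, hφ₂p⟩ := Filter.extraction_of_frequently_atTop hgfreq
    set s' : ℝ := s - sa with hs'
    have hy' : ∀ j, c * s' + ε/2 ≤ ∑ i ∈ S', ‖y (φ₁ (φ₂ j)) i‖ := by
      intro j
      have h1 := hy (φ₁ (φ₂ j))
      rw [Finset.sum_insert ha] at h1
      have h2 := hα1 (φ₂ j)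
      rw [abs_lt] at h2
      have h3 : c * s' = c * s - c * sa := by ring
      linarith [hcsa, h2.2]
    obtain ⟨u', hu'1, φ₃, hφ₃, hφ₃p⟩ := IH (fun j => y (φ₁ (φ₂ j))) C
      (fun j => hC _) s' (ε/2) (by positivity) hy'
    refine ⟨Function.update u' a g, ?_, φ₁ ∘ φ₂ ∘ φ₃, ?_, ?_⟩
    · intro i
      by_cases h : i = a
      · subst h; simpa using hg1
      · rw [Function.update_of_ne h]; exact hu'1 i
    · exact (hφ₁.comp hφ₂).comp hφ₃
    · intro j
      rw [Finset.sum_insert ha]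
      have e1 : Function.update u' a g a = g := Function.update_self a g u'
      have e2 : ∑ i ∈ S', Function.update u' a g i ((y ((φ₁ ∘ φ₂ ∘ φ₃) j)) i)
          = ∑ i ∈ S', u' i ((y ((φ₁ ∘ φ₂ ∘ φ₃) j)) i) := by
        refine Finset.sum_congr rfl (fun i hi => ?_)
        rw [Function.update_of_ne (by rintro rfl; exact ha hi)]
      rw [e1, e2]
      have h1 : sa < g (y (φ₁ (φ₂ (φ₃ j))) a) := hφ₂p (φ₃ j)
      have h2 : s' < ∑ i ∈ S', u' i (y (φ₁ (φ₂ (φ₃ j))) i) := hφ₃p j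
      have : (φ₁ ∘ φ₂ ∘ φ₃) j = φ₁ (φ₂ (φ₃ j)) := rfl
      rw [this]
      linarith

end LS

section Lsum

set_option maxHeartbeats 1000000 in
lemma Lsum {ι : Type*} {X : ι → Type*} [∀ i, NormedAddCommGroup (X i)] [∀ i, NormedSpace ℝ (X i)]
    {c : ℝ} (hc : 1 ≤ c)
    (hX : ∀ i, ∀ x : ℕ → X i, (∃ M : ℝ, ∀ n, ‖x n‖ ≤ M) → ca x ≤ c * delta x)
    (y : ℕ → lp X 1) (C : ℝ) (hC : ∀ j, ‖y j‖ ≤ C) (t ε : ℝ) (ht : 0 ≤ t) (hε : 0 < ε)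
    (hlow : ∀ j, c * t + ε ≤ ‖y j‖) :
    ∃ F : lp X 1 →L[ℝ] ℝ, ‖F‖ ≤ 1 ∧ ∃ᶠ j in Filter.atTop, t < F (y j) := by
  classical
  have hc0 : (0:ℝ) < c := lt_of_lt_of_le one_pos hc
  set η : ℝ := ε / (32 * c) with hηdef
  have hη : 0 < η := by positivity
  have hη32 : η * (32 * c) = ε := by rw [hηdef]; field_simp
  set m : Finset ι → ℕ → ℝ := fun S j => ∑ i ∈ S, ‖y j i‖ with hm
  have hm0 : ∀ S j, 0 ≤ m S j := fun S j => Finset.sum_nonneg fun i _ => norm_nonneg _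
  have hmC : ∀ S j, m S j ≤ C := fun S j => (lp1_sum_le (y j) S).trans (hC j)
  have hbdd : ∀ S : Finset ι, Filter.IsBoundedUnder (· ≤ ·) Filter.atTop (m S) :=
    fun S => Filter.isBoundedUnder_of ⟨C, fun j => hmC S j⟩
  have hcobdd : ∀ S : Finset ι, Filter.IsCoboundedUnder (· ≤ ·) Filter.atTop (m S) :=
    fun S => Filter.IsBoundedUnder.isCoboundedUnder_le
      (Filter.isBoundedUnder_of ⟨0, fun j => hm0 S j⟩)
  set A : Finset ι → ℝ := fun S => Filter.limsup (m S) Filter.atTop with hA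
  have hAC : ∀ S, A S ≤ C := fun S =>
    Filter.limsup_le_of_le (hcobdd S) (Filter.Eventually.of_forall (hmC S))
  set σ : ℝ := sSup (Set.range A) with hσ
  have hrange_bdd : BddAbove (Set.range A) := ⟨C, by rintro r ⟨S, rfl⟩; exact hAC S⟩
  obtain ⟨r0, ⟨S₀, rfl⟩, hS₀⟩ :=
    exists_lt_of_lt_csSup (Set.range_nonempty A) (show σ - η < σ by linarith)
  set μ : ℝ := A S₀ with hμ
  have hμσ : μ ≤ σ := le_csSup hrange_bdd ⟨S₀, rfl⟩
  have hμlow : σ - η < μ := hS₀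
  have hfreq : ∃ᶠ j in Filter.atTop, μ - η < m S₀ j :=
    Filter.frequently_lt_of_lt_limsup (hcobdd S₀) (by linarith)
  obtain ⟨φa, hφa, hφap⟩ := Filter.extraction_of_frequently_atTop hfreq
  have hev : ∀ᶠ j in Filter.atTop, m S₀ j < μ + η :=
    Filter.eventually_lt_of_limsup_lt (by linarith) (hbdd S₀)
  obtain ⟨N₂, hN₂⟩ := Filter.eventually_atTop.1 hev
  set φ₁ : ℕ → ℕ := fun j => φa (j + N₂) with hφ₁def
  have hφ₁ : StrictMono φ₁ := hφa.comp (fun x y h => by simpa using h)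
  have hφ₁low : ∀ j, μ - η < m S₀ (φ₁ j) := fun j => hφap (j + N₂)
  have hφ₁high : ∀ j, m S₀ (φ₁ j) < μ + η := fun j =>
    hN₂ (φ₁ j) (le_trans (by omega) (hφa.le_apply))
  have hstar : ∀ T : Finset ι, Disjoint S₀ T →
      ∀ᶠ j in Filter.atTop, m T (φ₁ j) < 3 * η := by
    intro T hT
    have h1 : A (S₀ ∪ T) ≤ σ := le_csSup hrange_bdd ⟨S₀ ∪ T, rfl⟩
    have h2 : ∀ᶠ n in Filter.atTop, m (S₀ ∪ T) n < σ + η :=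
      Filter.eventually_lt_of_limsup_lt (by linarith) (hbdd _)
    have h3 := (hφ₁.tendsto_atTop).eventually h2
    filter_upwards [h3] with j hj
    have h4 : m (S₀ ∪ T) (φ₁ j) = m S₀ (φ₁ j) + m T (φ₁ j) := Finset.sum_union hT
    have h5 := hφ₁low j
    rw [h4] at hj
    linarith
  set s' : ℝ := (μ - 2 * η) / c with hs'
  have hcs' : c * s' = μ - 2 * η := by
    rw [hs', mul_div_cancel₀ _ (ne_of_gt hc0)]
  obtain ⟨u₀, hu₀, φ₂, hφ₂, hφ₂p⟩ := LS hc hX S₀ (fun j => y (φ₁ j)) C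
    (fun j => hC _) s' η hη (fun j => by
      have := hφ₁low j
      rw [hcs']
      exact le_of_lt (by linarith))
  set w : ℕ → lp X 1 := fun j => y (φ₁ (φ₂ j)) with hw
  have hwS₀low : ∀ j, μ - η < ∑ i ∈ S₀, ‖w j i‖ := fun j => hφ₁low (φ₂ j)
  have hwS₀high : ∀ j, ∑ i ∈ S₀, ‖w j i‖ < μ + η := fun j => hφ₁high (φ₂ j)
  have hwu₀ : ∀ j, s' < ∑ i ∈ S₀, u₀ i (w j i) := hφ₂p
  have hwlow : ∀ j, c * t + ε ≤ ‖w j‖ := fun j => hlow _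
  have hstar2 : ∀ T : Finset ι, Disjoint S₀ T →
      ∀ᶠ j in Filter.atTop, (∑ i ∈ T, ‖w j i‖) < 3 * η := by
    intro T hT
    exact (hφ₂.tendsto_atTop).eventually (hstar T hT)
  -- recursive hump construction
  have hseqex : ∃ seq : ℕ → ℕ × Finset ι, seq 0 = (0, ∅) ∧
      ∀ k, Disjoint S₀ (seq k).2 ∧
        ((seq k).1 < (seq (k+1)).1 ∧ (seq k).2 ⊆ (seq (k+1)).2 ∧
          (∑ i ∈ (seq k).2, ‖w (seq (k+1)).1 i‖) < 3 * η ∧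
          ‖w (seq (k+1)).1‖ - η < ∑ i ∈ S₀ ∪ (seq (k+1)).2, ‖w (seq (k+1)).1 i‖) := by
    have hstep : ∀ p : ℕ × Finset ι, Disjoint S₀ p.2 → ∃ q : ℕ × Finset ι,
        p.1 < q.1 ∧ p.2 ⊆ q.2 ∧ Disjoint S₀ q.2 ∧
          (∑ i ∈ p.2, ‖w q.1 i‖) < 3 * η ∧
          ‖w q.1‖ - η < ∑ i ∈ S₀ ∪ q.2, ‖w q.1 i‖ := by
      rintro ⟨n, G⟩ hG
      obtain ⟨n', hn'1, hn'2⟩ := ((hstar2 G hG).and (Filter.eventually_gt_atTop n)).exists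
      obtain ⟨T', hT'⟩ := lp1_tail (w n') hη
      refine ⟨⟨n', G ∪ (T' \ (S₀ ∪ G))⟩, hn'2, Finset.subset_union_left, ?_, hn'1, ?_⟩
      · refine Finset.disjoint_union_right.2 ⟨hG, ?_⟩
        refine Finset.disjoint_right.2 fun i hmem hiS₀ => ?_
        exact (Finset.mem_sdiff.1 hmem).2 (Finset.mem_union_left _ hiS₀)
      · have hsub : T' ⊆ S₀ ∪ (G ∪ (T' \ (S₀ ∪ G))) := by
          intro i hi
          by_cases h : i ∈ S₀ ∪ G
          · rcases Finset.mem_union.1 h with h' | h'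
            · exact Finset.mem_union_left _ h'
            · exact Finset.mem_union_right _ (Finset.mem_union_left _ h')
          · exact Finset.mem_union_right _
              (Finset.mem_union_right _ (Finset.mem_sdiff.2 ⟨hi, h⟩))
        calc ‖w n'‖ - η < ∑ i ∈ T', ‖w n' i‖ := hT'
          _ ≤ ∑ i ∈ S₀ ∪ (G ∪ (T' \ (S₀ ∪ G))), ‖w n' i‖ :=
              Finset.sum_le_sum_of_subset_of_nonneg hsub (fun i _ _ => norm_nonneg _)
    have hd0 : Disjoint S₀ (((0:ℕ), (∅ : Finset ι)).2) := by simp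
    set nxt : (p : ℕ × Finset ι) → ℕ × Finset ι := fun p =>
      if h : Disjoint S₀ p.2 then (hstep p h).choose else p with hnxtdef
    have hnxt : ∀ p (h : Disjoint S₀ p.2),
        p.1 < (nxt p).1 ∧ p.2 ⊆ (nxt p).2 ∧ Disjoint S₀ (nxt p).2 ∧
          (∑ i ∈ p.2, ‖w (nxt p).1 i‖) < 3 * η ∧
          ‖w (nxt p).1‖ - η < ∑ i ∈ S₀ ∪ (nxt p).2, ‖w (nxt p).1 i‖ := by
      intro p h
      rw [hnxtdef]
      simp only [dif_pos h]
      exact (hstep p h).choose_spec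
    refine ⟨fun k => Nat.rec ((0:ℕ), (∅ : Finset ι)) (fun _ p => nxt p) k, rfl, ?_⟩
    have hdisj : ∀ k, Disjoint S₀
        ((Nat.rec ((0:ℕ), (∅ : Finset ι)) (fun _ p => nxt p) k : ℕ × Finset ι)).2 := by
      intro k
      induction k with
      | zero => simpa using hd0
      | succ k ih => exact (hnxt _ ih).2.2.1
    intro k
    refine ⟨hdisj k, ?_, ?_, ?_, ?_⟩
    · exact (hnxt _ (hdisj k)).1
    · exact (hnxt _ (hdisj k)).2.1
    · exact (hnxt _ (hdisj k)).2.2.2.1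
    · exact (hnxt _ (hdisj k)).2.2.2.2
  obtain ⟨seq, hseq0, hseqp⟩ := hseqex
  set jj : ℕ → ℕ := fun k => (seq k).1 with hjj
  set G : ℕ → Finset ι := fun k => (seq k).2 with hG
  have hdisj : ∀ k, Disjoint S₀ (G k) := fun k => (hseqp k).1
  have hk1 : ∀ k, jj k < jj (k+1) := fun k => (hseqp k).2.1
  have hk2 : ∀ k, G k ⊆ G (k+1) := fun k => (hseqp k).2.2.1
  have hk4 : ∀ k, (∑ i ∈ G k, ‖w (jj (k+1)) i‖) < 3 * η := fun k => (hseqp k).2.2.2.1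
  have hk5 : ∀ k, ‖w (jj (k+1))‖ - η < ∑ i ∈ S₀ ∪ G (k+1), ‖w (jj (k+1)) i‖ :=
    fun k => (hseqp k).2.2.2.2
  have hjjmono : StrictMono jj := strictMono_nat_of_lt_succ hk1
  have hGmono : Monotone G := monotone_nat_of_le_succ hk2
  -- hump functionals
  have hgex : ∃ g : ∀ i, X i →L[ℝ] ℝ, (∀ i, ‖g i‖ ≤ 1) ∧
      ∀ (i : ι) (h : ∃ k, i ∈ G k),
        g i ((w (jj (Nat.find h))) i) = ‖(w (jj (Nat.find h))) i‖ := by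
    refine ⟨fun i => if h : ∃ k, i ∈ G k
        then (exists_dual_vector'' ℝ (w (jj (Nat.find h)) i)).choose else 0,
      fun i => ?_, fun i h => ?_⟩
    · by_cases h : ∃ k, i ∈ G k
      · simp only [dif_pos h]
        exact (exists_dual_vector'' ℝ (w (jj (Nat.find h)) i)).choose_spec.1
      · simp [dif_neg h]
    · simp only [dif_pos h]
      have := (exists_dual_vector'' ℝ (w (jj (Nat.find h)) i)).choose_spec.2
      simpa using this
  obtain ⟨g, hg1, hgspec⟩ := hgex
  set u : ∀ i, X i →L[ℝ] ℝ := fun i => if i ∈ S₀ then u₀ i else g i with hudef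
  have hu1 : ∀ i, ‖u i‖ ≤ 1 := by
    intro i
    rw [hudef]
    by_cases h : i ∈ S₀
    · simp only [if_pos h]; exact hu₀ i
    · simp only [if_neg h]; exact hg1 i
  refine ⟨combF u hu1, combF_norm_le u hu1, ?_⟩
  have hkey : ∀ k : ℕ, t < combF u hu1 (w (jj (k + 1))) := by
    intro k
    set z : lp X 1 := w (jj (k + 1)) with hz
    have hsplit := combF_split u hu1 z (S₀ ∪ G (k + 1))
    have htail : |∑' i : ↑((↑(S₀ ∪ G (k+1)) : Set ι)ᶜ), u ↑i (z ↑i)| ≤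
        ‖z‖ - ∑ i ∈ S₀ ∪ G (k+1), ‖z i‖ := combF_compl_bound u hu1 z _
    have hdisj' : Disjoint S₀ (G (k + 1)) := hdisj (k + 1)
    have hsum1 : ∑ i ∈ S₀ ∪ G (k + 1), u i (z i)
        = ∑ i ∈ S₀, u i (z i) + ∑ i ∈ G (k + 1), u i (z i) := Finset.sum_union hdisj'
    have hsum2 : ∑ i ∈ G (k + 1), u i (z i)
        = ∑ i ∈ G (k + 1) \ G k, u i (z i) + ∑ i ∈ G k, u i (z i) :=
      (Finset.sum_sdiff (hk2 k)).symm
    have hS₀part : s' < ∑ i ∈ S₀, u i (z i) := by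
      have h := hwu₀ (jj (k + 1))
      have heq : ∑ i ∈ S₀, u i (z i) = ∑ i ∈ S₀, u₀ i (z i) :=
        Finset.sum_congr rfl fun i hi => by rw [hudef]; simp [if_pos hi]
      rw [heq]; exact h
    have holdpart : -(3 * η) < ∑ i ∈ G k, u i (z i) := by
      have h1 : ∀ i ∈ G k, -‖z i‖ ≤ u i (z i) := by
        intro i hi
        have h2 := sumF_norm_le u hu1 z i
        rw [Real.norm_eq_abs] at h2
        linarith [(abs_le.1 h2).1]
      calc -(3 * η) < -(∑ i ∈ G k, ‖z i‖) := by linarith [hk4 k]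
        _ = ∑ i ∈ G k, -‖z i‖ := by rw [← Finset.sum_neg_distrib]
        _ ≤ ∑ i ∈ G k, u i (z i) := Finset.sum_le_sum h1
    have hfresh : ∑ i ∈ G (k + 1) \ G k, u i (z i) = ∑ i ∈ G (k + 1) \ G k, ‖z i‖ := by
      refine Finset.sum_congr rfl fun i hi => ?_
      obtain ⟨hi1, hi2⟩ := Finset.mem_sdiff.1 hi
      have hiS₀ : i ∉ S₀ := fun h => (Finset.disjoint_right.1 hdisj') hi1 h
      have hex : ∃ k', i ∈ G k' := ⟨k + 1, hi1⟩
      have hfind : Nat.find hex = k + 1 := by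
        have h1 : Nat.find hex ≤ k + 1 := Nat.find_min' hex hi1
        have h2 : ¬ Nat.find hex ≤ k := by
          intro hle
          exact hi2 (hGmono hle (Nat.find_spec hex))
        omega
      have h3 := hgspec i hex
      rw [hfind] at h3
      rw [hudef]
      simp only [if_neg hiS₀]
      exact h3
    have hhump : ∑ i ∈ G (k + 1) \ G k, ‖z i‖
        = (∑ i ∈ S₀ ∪ G (k + 1), ‖z i‖) - (∑ i ∈ S₀, ‖z i‖) - (∑ i ∈ G k, ‖z i‖) := by
      have e1 : ∑ i ∈ S₀ ∪ G (k + 1), ‖z i‖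
          = ∑ i ∈ S₀, ‖z i‖ + ∑ i ∈ G (k + 1), ‖z i‖ := Finset.sum_union hdisj'
      have e2 : ∑ i ∈ G (k + 1), ‖z i‖
          = ∑ i ∈ G (k + 1) \ G k, ‖z i‖ + ∑ i ∈ G k, ‖z i‖ := (Finset.sum_sdiff (hk2 k)).symm
      linarith
    have hhump_nonneg : 0 ≤ ∑ i ∈ G (k + 1) \ G k, ‖z i‖ :=
      Finset.sum_nonneg fun i _ => norm_nonneg _
    have hS₀z_high : ∑ i ∈ S₀, ‖z i‖ < μ + η := hwS₀high (jj (k + 1))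
    have hzlow : c * t + ε ≤ ‖z‖ := hwlow (jj (k + 1))
    have htail2 : -η < ∑' i : ↑((↑(S₀ ∪ G (k+1)) : Set ι)ᶜ), u ↑i (z ↑i) := by
      have h1 := (abs_le.1 htail).1
      linarith [hk5 k]
    have hGkz : (∑ i ∈ G k, ‖z i‖) < 3 * η := hk4 k
    have hcap : ‖z‖ - η < ∑ i ∈ S₀ ∪ G (k + 1), ‖z i‖ := hk5 k
    have hμ0 : 0 ≤ μ :=
      Filter.le_limsup_of_frequently_le
        (Filter.Frequently.of_forall fun j => hm0 S₀ j) (hbdd S₀)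
    rw [hsplit, hsum1, hsum2, hfresh]
    have hD1 : c * t + ε - μ - 5 * η < ∑ i ∈ G (k + 1) \ G k, ‖z i‖ := by
      rw [hhump]; linarith
    have hD0 : (0:ℝ) ≤ ∑ i ∈ G (k + 1) \ G k, ‖z i‖ := hhump_nonneg
    have harith : t < s' + (∑ i ∈ G (k + 1) \ G k, ‖z i‖) - 3 * η - η := by
      rw [hs']
      rcases le_or_gt μ (c * t + ε / 2) with hcase | hcase
      · have key : t + η < (μ - 2*η)/c + (c * t + ε - μ - 5*η) - 4*η := by
          rw [div_lt_iff₀ hc0] at *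
          rw [← sub_pos]
          have e : ((μ - 2*η)/c) * c = μ - 2*η := div_mul_cancel₀ _ (ne_of_gt hc0)
          nlinarith [mul_nonneg (sub_nonneg.2 hc) (show (0:ℝ) ≤ c*t - μ + ε/2 by linarith),
            mul_nonneg (sub_nonneg.2 hc) (le_of_lt hη), e, hη32]
        linarith
      · have key2 : t + η < (μ - 2*η)/c - 4*η := by
          rw [← sub_pos]
          have e : ((μ - 2*η)/c) * c = μ - 2*η := div_mul_cancel₀ _ (ne_of_gt hc0)
          have hDpos : (0:ℝ) < c := hc0
          nlinarith [e, hη32, mul_nonneg (sub_nonneg.2 hc) (le_of_lt hη)]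
        linarith
    linarith [hS₀part, holdpart, htail2]
  refine Filter.frequently_atTop.2 fun N => ?_
  refine ⟨φ₁ (φ₂ (jj (N + 1))), ?_, hkey N⟩
  calc N ≤ N + 1 := by omega
    _ ≤ jj (N + 1) := hjjmono.le_apply
    _ ≤ φ₂ (jj (N + 1)) := hφ₂.le_apply
    _ ≤ φ₁ (φ₂ (jj (N + 1))) := hφ₁.le_apply

end Lsum

/-- The `c`-Schur property (`c ≥ 1`) is preserved by arbitrary `ℓ₁`-sums. -/
theorem stmt11 {ι : Type*} (X : ι → Type*) [∀ i, NormedAddCommGroup (X i)]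
    [∀ i, NormedSpace ℝ (X i)] [∀ i, CompleteSpace (X i)] (c : ℝ) (hc : 1 ≤ c)
    (hX : ∀ i, ∀ x : ℕ → X i, (∃ M : ℝ, ∀ n, ‖x n‖ ≤ M) → ca x ≤ c * delta x)
    (z : ℕ → lp X 1) (hz : ∃ M : ℝ, ∀ n, ‖z n‖ ≤ M) :
    ca z ≤ c * delta z := by
  classical
  obtain ⟨M, hM⟩ := hz
  have hc0 : (0:ℝ) < c := lt_of_lt_of_le one_pos hc
  by_contra hcon
  push_neg at hcon
  set δ : ℝ := delta z with hδ
  have hδ0 : 0 ≤ δ := delta_nonneg z hM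
  set ε₀ : ℝ := ca z - c * δ with hε₀
  have hε₀pos : 0 < ε₀ := by rw [hε₀]; linarith
  -- extract pairs with large distance in every tail
  have hpair : ∀ n : ℕ, ∃ k l, n ≤ k ∧ n ≤ l ∧ c * δ + ε₀ / 2 < ‖z k - z l‖ := by
    intro n
    have h1 : c * δ + ε₀ / 2 < Metric.diam (z '' Set.Ici n) := by
      have h2 := ca_le z n
      have : c * δ + ε₀ / 2 < ca z := by rw [hε₀] at *; linarith
      linarith
    by_contra h
    push_neg at h
    have h3 : Metric.diam (z '' Set.Ici n) ≤ c * δ + ε₀ / 2 := by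
      apply Metric.diam_le_of_forall_dist_le
      · nlinarith [mul_nonneg (le_of_lt hc0) hδ0]
      · rintro a ⟨k, hk, rfl⟩ b ⟨l, hl, rfl⟩
        rw [dist_eq_norm]
        exact h k l (Set.mem_Ici.1 hk) (Set.mem_Ici.1 hl)
    linarith
  choose kf lf hkf hlf hkl using hpair
  set y : ℕ → lp X 1 := fun n => z (kf n) - z (lf n) with hy
  have hyC : ∀ n, ‖y n‖ ≤ 2 * M := by
    intro n
    calc ‖z (kf n) - z (lf n)‖ ≤ ‖z (kf n)‖ + ‖z (lf n)‖ := norm_sub_le _ _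
      _ ≤ 2 * M := by linarith [hM (kf n), hM (lf n)]
  set t : ℝ := δ + ε₀ / (4 * c) with htdef
  have ht : 0 ≤ t := by
    have : 0 < ε₀ / (4 * c) := by positivity
    rw [htdef]; linarith
  have hct : c * t = c * δ + ε₀ / 4 := by
    rw [htdef]; field_simp
  have hlow : ∀ n, c * t + ε₀ / 4 ≤ ‖y n‖ := by
    intro n
    rw [hct]
    have := hkl n
    have e : c * δ + ε₀ / 4 + ε₀ / 4 = c * δ + ε₀ / 2 := by ring
    rw [e]
    exact le_of_lt (this)
  obtain ⟨F, hF1, hFfreq⟩ := Lsum hc hX y (2 * M) hyC t (ε₀ / 4) ht (by positivity) hlow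
  have hca : t ≤ ca (fun n => F (z n)) := by
    apply le_ca
    intro n
    have hbd : Bornology.IsBounded ((fun n => F (z n)) '' Set.Ici n) := by
      apply (Metric.isBounded_closedBall (x := (0:ℝ)) (r := M)).subset
      rintro a ⟨j', -, rfl⟩
      rw [mem_closedBall_zero_iff, Real.norm_eq_abs]
      have h1 : ‖F (z j')‖ ≤ ‖F‖ * ‖z j'‖ := F.le_opNorm _
      have h2 : ‖F‖ * ‖z j'‖ ≤ 1 * M :=
        mul_le_mul hF1 (hM j') (norm_nonneg _) zero_le_one
      rw [Real.norm_eq_abs] at h1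
      linarith
    obtain ⟨j, hjn, hj⟩ := (Filter.frequently_atTop.1 hFfreq) n
    have he : F (y j) = F (z (kf j)) - F (z (lf j)) := by rw [hy]; simp [map_sub]
    have hmem1 : F (z (kf j)) ∈ (fun n => F (z n)) '' Set.Ici n :=
      ⟨kf j, Set.mem_Ici.2 (le_trans hjn (hkf j)), rfl⟩
    have hmem2 : F (z (lf j)) ∈ (fun n => F (z n)) '' Set.Ici n :=
      ⟨lf j, Set.mem_Ici.2 (le_trans hjn (hlf j)), rfl⟩
    calc t ≤ F (y j) := le_of_lt hj
      _ = F (z (kf j)) - F (z (lf j)) := he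
      _ ≤ |F (z (kf j)) - F (z (lf j))| := le_abs_self _
      _ = dist (F (z (kf j))) (F (z (lf j))) := (Real.dist_eq _ _).symm
      _ ≤ Metric.diam ((fun n => F (z n)) '' Set.Ici n) :=
          Metric.dist_le_diam_of_mem hbd hmem1 hmem2
  have hle : ca (fun n => F (z n)) ≤ δ := ca_comp_le_delta z hM hF1
  have hδt : δ < t := by
    have : 0 < ε₀ / (4 * c) := by positivity
    rw [htdef]; linarith
  linarith
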